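/- Let Y be a metric space, Z a separable metric space, ψ : Y → Z continuous, γ : [0,1] → Y continuous, and F : [0,1] → [0,∞) Lebesgue integrable. Let E ⊂ Y be compact with H¹_Z(ψ(E)) = 0. Suppose that for every closed interval I ⊆ [0,1] ∖ γ⁻¹(E), the length of ψ∘γ restricted to I satisfies ℓ(ψ∘γ|_I) ≤ ∫_I F dL¹. Then ℓ(ψ∘γ) ≤ ∫_{[0,1]} F dL¹. -/

import Mathlib

/-!
Cut `[0,1]` at the closed set `γ⁻¹(E) ∪ {0,1}`. For each gap `[uᵢ, uᵢ₊₁]` of a subdivision,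
the image `ψ∘γ([uᵢ, uᵢ₊₁])` is connected, so the distance between its endpoints is at most its
`H¹` measure; removing the `H¹`-null part coming from `E` leaves the image of an open set `W`
avoiding `γ⁻¹(E)`. Each connected component of `W` is an interval on which the hypothesis bounds
the variation, and the `H¹` measure of a curve is at most its variation (via the arc-length
parametrisation). Summing over the countably many components and the disjoint gaps gives the
claim.
-/

open MeasureTheory Set

theorem eVariationOn_le_measure_of_ordConnected {α Z : Type*} [LinearOrder α] [MeasurableSpace α]
    [PseudoEMetricSpace Z] (ν : Measure α) {f : α → Z} {s : Set α} (hs : s.OrdConnected)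
    (h : ∀ a b, Icc a b ⊆ s → eVariationOn f (Icc a b) ≤ ν (Icc a b)) :
    eVariationOn f s ≤ ν s := by
  rw [eVariationOn.eq_biSup_inter_Icc]
  refine iSup₂_le fun p hp => ?_
  have hIcc : Icc p.1 p.2 ⊆ s := hs.out hp.1 hp.2.1
  rw [inter_eq_right.2 hIcc]
  exact (h _ _ hIcc).trans (measure_mono hIcc)

theorem HasUnitSpeedOn.lipschitzOnWith {Z : Type*} [PseudoEMetricSpace Z] {f : ℝ → Z}
    {s : Set ℝ} (h : HasUnitSpeedOn f s) : LipschitzOnWith 1 f s := by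
  intro x hx y hy
  wlog hxy : x ≤ y generalizing x y
  · rw [edist_comm, edist_comm x]
    exact this hy hx (le_of_not_ge hxy)
  calc edist (f x) (f y) ≤ eVariationOn f (s ∩ Icc x y) :=
        eVariationOn.edist_le f ⟨hx, le_rfl, hxy⟩ ⟨hy, hxy, le_rfl⟩
    _ = 1 * edist x y := by
        rw [h hx hy, one_mul, edist_dist, Real.dist_eq, abs_sub_comm,
          abs_of_nonneg (sub_nonneg.2 hxy), NNReal.coe_one, one_mul]

theorem hausdorffMeasure_image_le_eVariationOn {Z : Type*} [EMetricSpace Z] [MeasurableSpace Z]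
    [BorelSpace Z] (f : ℝ → Z) (s : Set ℝ) : μH[1] (f '' s) ≤ eVariationOn f s := by
  rcases eq_top_or_lt_top (eVariationOn f s) with hvar | hvar
  · simp [hvar]
  rcases s.eq_empty_or_nonempty with rfl | ⟨a, ha⟩
  · simp
  have hbv : BoundedVariationOn f s := hvar.ne
  have hf : LocallyBoundedVariationOn f s := hbv.locallyBoundedVariationOn
  set v := variationOnFromTo f s a
  set φ := naturalParameterization f s a
  have himage : f '' s = φ '' (v '' s) := by
    rw [image_image]
    exact image_congr fun b hb =>
      (edist_eq_zero.1 (edist_naturalParameterization_eq_zero hf ha hb)).symm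
  have hdiam : Metric.ediam (v '' s) ≤ eVariationOn f s := by
    refine Metric.ediam_le ?_
    rintro _ ⟨x, hx, rfl⟩ _ ⟨y, hy, rfl⟩
    rw [edist_dist, Real.dist_eq, variationOnFromTo.sub_right hf ha hx hy]
    exact ENNReal.ofReal_le_of_le_toReal (variationOnFromTo.abs_le_eVariationOn hbv)
  calc μH[1] (f '' s) = μH[1] (φ '' (v '' s)) := by rw [himage]
    _ ≤ μH[1] (v '' s) := by
        simpa using ((has_unit_speed_naturalParameterization f hf ha).lipschitzOnWith
          ).hausdorffMeasure_image_le zero_le_one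
    _ = volume (v '' s) := by rw [hausdorffMeasure_real]
    _ ≤ Metric.ediam (v '' s) := Real.volume_le_diam _
    _ ≤ eVariationOn f s := hdiam

theorem IsOpen.measure_image_le_of_isPreconnected {X Z : Type*} [TopologicalSpace X]
    [LocallyConnectedSpace X] [TopologicalSpace.SeparableSpace X] [MeasurableSpace X]
    [OpensMeasurableSpace X] [MeasurableSpace Z] (μ : Measure Z) (ν : Measure X) (f : X → Z)
    {W : Set X} (hW : IsOpen W) (h : ∀ C ⊆ W, IsPreconnected C → μ (f '' C) ≤ ν C) :
    μ (f '' W) ≤ ν W := by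
  set S := connectedComponentIn W '' W
  have hdisj : S.PairwiseDisjoint id := by
    rintro _ ⟨x, -, rfl⟩ _ ⟨y, -, rfl⟩ hne
    refine Set.disjoint_left.2 fun z hzx hzy => hne ?_
    exact (connectedComponentIn_eq hzx).trans (connectedComponentIn_eq hzy).symm
  have hopen : ∀ C ∈ S, IsOpen C := by
    rintro _ ⟨x, -, rfl⟩
    exact hW.connectedComponentIn
  have hS : S.Countable := hdisj.countable_of_isOpen hopen <| by
    rintro _ ⟨x, hx, rfl⟩
    exact ⟨x, mem_connectedComponentIn hx⟩
  have hWS : W = ⋃₀ S := by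
    refine subset_antisymm
      (fun x hx => ⟨_, mem_image_of_mem _ hx, mem_connectedComponentIn hx⟩) ?_
    refine sUnion_subset ?_
    rintro _ ⟨x, -, rfl⟩
    exact connectedComponentIn_subset W x
  have hSW : ∀ C ∈ S, C ⊆ W ∧ IsPreconnected C := by
    rintro _ ⟨x, -, rfl⟩
    exact ⟨connectedComponentIn_subset W x, isPreconnected_connectedComponentIn⟩
  calc μ (f '' W) = μ (⋃ C ∈ S, f '' C) := by rw [hWS, sUnion_eq_biUnion, image_iUnion₂]
    _ ≤ ∑' C : S, μ (f '' C) := measure_biUnion_le μ hS _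
    _ ≤ ∑' C : S, ν C := ENNReal.tsum_le_tsum fun C => h C (hSW C C.2).1 (hSW C C.2).2
    _ = ν W := by
        rw [hWS, measure_sUnion hS hdisj fun C hC => (hopen C hC).measurableSet]

theorem hausdorffMeasure_image_le_of_isOpen {Z : Type*} [EMetricSpace Z] [MeasurableSpace Z]
    [BorelSpace Z] (ν : Measure ℝ) {θ : ℝ → Z} {W : Set ℝ} (hW : IsOpen W)
    (h : ∀ a b, Icc a b ⊆ W → eVariationOn θ (Icc a b) ≤ ν (Icc a b)) :
    μH[1] (θ '' W) ≤ ν W :=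
  hW.measure_image_le_of_isPreconnected _ _ _ fun C hCW hC =>
    (hausdorffMeasure_image_le_eVariationOn θ C).trans <|
      eVariationOn_le_measure_of_ordConnected ν hC.ordConnected fun a b hab =>
        h a b (hab.trans hCW)

theorem IsPreconnected.edist_le_hausdorffMeasure {Z : Type*} [MetricSpace Z] [MeasurableSpace Z]
    [BorelSpace Z] {C : Set Z} (hC : IsPreconnected C) {x y : Z} (hx : x ∈ C) (hy : y ∈ C) :
    edist x y ≤ μH[1] C := by
  have hf : LipschitzWith 1 (dist · x) := LipschitzWith.dist_left x
  have hIcc : Icc 0 (dist y x) ⊆ (dist · x) '' C :=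
    (hC.image _ hf.continuous.continuousOn).Icc_subset ⟨x, hx, dist_self x⟩ ⟨y, hy, rfl⟩
  calc edist x y = volume (Icc 0 (dist y x)) := by
        rw [Real.volume_Icc, sub_zero, edist_dist, dist_comm]
    _ = μH[1] (Icc 0 (dist y x)) := by rw [hausdorffMeasure_real]
    _ ≤ μH[1] ((dist · x) '' C) := measure_mono hIcc
    _ ≤ μH[1] C := by simpa using hf.hausdorffMeasure_image_le zero_le_one C

theorem edist_le_hausdorffMeasure_image_Ioo_inter {Z : Type*} [MetricSpace Z] [MeasurableSpace Z]
    [BorelSpace Z] {θ : ℝ → Z} {a b : ℝ} (hab : a ≤ b) (hθ : ContinuousOn θ (Icc a b))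
    {V : Set ℝ} (hnull : μH[1] (θ '' (Icc a b \ V)) = 0) :
    edist (θ a) (θ b) ≤ μH[1] (θ '' (Ioo a b ∩ V)) := by
  have := Measure.nullSingletonClass_hausdorff Z one_pos
  have hcover : Icc a b ⊆ (Ioo a b ∩ V) ∪ ((Icc a b \ V) ∪ {a, b}) := by
    intro x hx
    by_cases hxV : x ∈ V
    · rcases eq_endpoints_or_mem_Ioo_of_mem_Icc hx with rfl | rfl | hx'
      exacts [Or.inr (Or.inr (Or.inl rfl)), Or.inr (Or.inr (Or.inr rfl)), Or.inl ⟨hx', hxV⟩]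
    · exact Or.inr (Or.inl ⟨hx, hxV⟩)
  have hends : μH[1] (θ '' (Icc a b \ V) ∪ {θ a, θ b}) = 0 :=
    measure_union_null hnull ((toFinite _).measure_zero _)
  calc edist (θ a) (θ b) ≤ μH[1] (θ '' Icc a b) :=
        (isPreconnected_Icc.image θ hθ).edist_le_hausdorffMeasure
          (mem_image_of_mem θ (left_mem_Icc.2 hab)) (mem_image_of_mem θ (right_mem_Icc.2 hab))
    _ ≤ μH[1] (θ '' (Ioo a b ∩ V)) + μH[1] (θ '' (Icc a b \ V) ∪ {θ a, θ b}) := by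
        refine (measure_mono ?_).trans (measure_union_le _ _)
        simpa only [image_union, image_insert_eq, image_singleton] using image_mono hcover
    _ = μH[1] (θ '' (Ioo a b ∩ V)) := by rw [hends, add_zero]

theorem eVariationOn_Icc_le_measure {Z : Type*} [MetricSpace Z] [MeasurableSpace Z]
    [BorelSpace Z] (ν : Measure ℝ) {θ : ℝ → Z} {a b : ℝ} (hθ : ContinuousOn θ (Icc a b))
    {V : Set ℝ} (hV : IsOpen V) (hnull : μH[1] (θ '' (Icc a b \ V)) = 0)
    (h : ∀ c d, Icc c d ⊆ V → eVariationOn θ (Icc c d) ≤ ν (Icc c d)) :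
    eVariationOn θ (Icc a b) ≤ ν (Icc a b) := by
  refine iSup_le ?_
  rintro ⟨n, u, hu, hus⟩
  set W : ℕ → Set ℝ := fun i => Ioo (u i) (u (i + 1)) ∩ V
  have hWopen : ∀ i, IsOpen (W i) := fun i => isOpen_Ioo.inter hV
  have hdisj : Pairwise (Function.onFun Disjoint W) := by
    refine hu.pairwise_disjoint_on_Ioo_succ.mono fun i j hij => ?_
    simpa only [Order.succ_eq_add_one] using hij.mono inter_subset_left inter_subset_left
  have hgap : ∀ i, Icc (u i) (u (i + 1)) ⊆ Icc a b := fun i =>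
    Icc_subset_Icc (hus i).1 (hus (i + 1)).2
  calc ∑ i ∈ Finset.range n, edist (θ (u (i + 1))) (θ (u i))
      ≤ ∑ i ∈ Finset.range n, μH[1] (θ '' W i) := Finset.sum_le_sum fun i _ => by
        rw [edist_comm]
        exact edist_le_hausdorffMeasure_image_Ioo_inter (hu i.le_succ) (hθ.mono (hgap i))
          (measure_mono_null (image_mono (sdiff_subset_sdiff_left (hgap i))) hnull)
    _ ≤ ∑ i ∈ Finset.range n, ν (W i) := Finset.sum_le_sum fun i _ =>
        hausdorffMeasure_image_le_of_isOpen ν (hWopen i) fun c d hcd =>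
          h c d (hcd.trans inter_subset_right)
    _ = ν (⋃ i ∈ Finset.range n, W i) :=
        (measure_biUnion_finset (hdisj.set_pairwise _) fun i _ => (hWopen i).measurableSet).symm
    _ ≤ ν (Icc a b) := measure_mono <| iUnion₂_subset fun i _ =>
        inter_subset_left.trans (Ioo_subset_Icc_self.trans (hgap i))

theorem statement19_general {Y Z : Type*} [MetricSpace Y] [MetricSpace Z]
    [MeasurableSpace Z] [BorelSpace Z]
    (ψ : Y → Z) (hψ : Continuous ψ)
    (γ : ℝ → Y) (hγ : ContinuousOn γ (Set.Icc 0 1))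
    (F : ℝ → ℝ) (hF : IntegrableOn F (Set.Icc 0 1)) (hF0 : ∀ t ∈ Set.Icc (0:ℝ) 1, 0 ≤ F t)
    (E : Set Y) (hE : IsCompact E) (hHE : μH[1] (ψ '' E) = 0)
    (hseg : ∀ a b : ℝ, Set.Icc a b ⊆ Set.Icc 0 1 \ (γ ⁻¹' E) →
      eVariationOn (ψ ∘ γ) (Set.Icc a b) ≤ ENNReal.ofReal (∫ t in Set.Icc a b, F t)) :
    eVariationOn (ψ ∘ γ) (Set.Icc 0 1) ≤ ENNReal.ofReal (∫ t in Set.Icc 0 1, F t) := by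
  set ν := volume.withDensity fun t => ENNReal.ofReal (F t)
  have hν : ∀ a b, Icc a b ⊆ Icc 0 1 → ENNReal.ofReal (∫ t in Icc a b, F t) = ν (Icc a b) :=
    fun a b hab => by
      rw [withDensity_apply _ measurableSet_Icc]
      exact ofReal_integral_eq_lintegral_ofReal (hF.mono_set hab)
        ((ae_restrict_iff' measurableSet_Icc).2 (ae_of_all _ fun t ht => hF0 t (hab ht)))
  set V := Ioo 0 1 ∩ γ ⁻¹' Eᶜ
  have hVopen : IsOpen V :=
    (hγ.mono Ioo_subset_Icc_self).isOpen_inter_preimage isOpen_Ioo hE.isClosed.isOpen_compl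
  have hVE : V ⊆ Icc 0 1 \ γ ⁻¹' E := fun t ht => ⟨Ioo_subset_Icc_self ht.1, ht.2⟩
  have hnull : μH[1] ((ψ ∘ γ) '' (Icc 0 1 \ V)) = 0 := by
    have := Measure.nullSingletonClass_hausdorff Z one_pos
    refine measure_mono_null ?_
      (measure_union_null hHE ((toFinite {ψ (γ 0), ψ (γ 1)}).measure_zero _))
    rintro _ ⟨t, ⟨ht, htV⟩, rfl⟩
    by_cases htE : γ t ∈ E
    · exact Or.inl ⟨γ t, htE, rfl⟩
    · rcases eq_endpoints_or_mem_Ioo_of_mem_Icc ht with rfl | rfl | ht'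
      exacts [Or.inr (Or.inl rfl), Or.inr (Or.inr rfl), absurd ⟨ht', htE⟩ htV]
  rw [hν 0 1 subset_rfl]
  exact eVariationOn_Icc_le_measure ν (hψ.comp_continuousOn hγ) hVopen hnull fun c d hcd =>
    (hseg c d (hcd.trans hVE)).trans_eq (hν c d (hcd.trans (hVE.trans sdiff_subset)))

/-- Let `Y` be a metric space, `Z` a separable metric space,
`ψ : Y → Z` continuous, `γ : [0,1] → Y` continuous and `F : [0,1] → [0,∞)` Lebesgue
integrable.  Let `E ⊂ Y` be compact with `H¹_Z(ψ(E)) = 0`.  If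
`ℓ(ψ∘γ|_I) ≤ ∫_I F dL¹` for every closed interval `I ⊆ [0,1] ∖ γ⁻¹(E)`, then
`ℓ(ψ∘γ) ≤ ∫_{[0,1]} F dL¹`. -/
theorem statement19 {Y Z : Type*} [MetricSpace Y] [MetricSpace Z]
    [TopologicalSpace.SeparableSpace Z] [MeasurableSpace Z] [BorelSpace Z]
    (ψ : Y → Z) (hψ : Continuous ψ)
    (γ : ℝ → Y) (hγ : ContinuousOn γ (Set.Icc 0 1))
    (F : ℝ → ℝ) (hF : IntegrableOn F (Set.Icc 0 1)) (hF0 : ∀ t ∈ Set.Icc (0:ℝ) 1, 0 ≤ F t)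
    (E : Set Y) (hE : IsCompact E) (hHE : μH[1] (ψ '' E) = 0)
    (hseg : ∀ a b : ℝ, Set.Icc a b ⊆ Set.Icc 0 1 \ (γ ⁻¹' E) →
      eVariationOn (ψ ∘ γ) (Set.Icc a b) ≤ ENNReal.ofReal (∫ t in Set.Icc a b, F t)) :
    eVariationOn (ψ ∘ γ) (Set.Icc 0 1) ≤ ENNReal.ofReal (∫ t in Set.Icc 0 1, F t) :=
  statement19_general ψ hψ γ hγ F hF hF0 E hE hHE hseg
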